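/- Let ε, δ, r ∈ ℝ and I₁ > 0. Let Ω, W : ℝ → ℝ³ be continuous and let Ω₁, Γ : ℝ → ℝ³ be differentiable curves satisfying: (i) I₁ Ω̇₁(t) = I₁ Ω₁(t) × Ω(t) + r Γ(t) × W(t) (law of change of angular momentum of the ball, with reaction force resultant W); (ii) Γ̇(t) = ε Γ(t) × Ω(t); and (iii) the rolling constraint Ω₁(t) × Γ(t) = δ Ω(t) × Γ(t) for all t. Then the function t ↦ ⟨Ω₁(t), Γ(t)⟩ is constant. -/

import Mathlib

open Matrix

/-!
Differentiating, `d/dt ⟨Ω₁, Γ⟩ = ⟨Ω̇₁, Γ⟩ + ε ⟨Ω₁, Γ × Ω⟩`. The reaction torque `r Γ × W` is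
orthogonal to `Γ`, so both terms are multiples of the triple product `⟨Ω, Ω₁ × Γ⟩`, and this
vanishes because the rolling constraint makes `Ω₁ × Γ` a multiple of `Ω × Γ`.
-/

theorem HasDerivAt.dotProduct {𝕜 ι : Type*} [NontriviallyNormedField 𝕜] [Fintype ι]
    {f g : 𝕜 → ι → 𝕜} {f' g' : ι → 𝕜} {x : 𝕜}
    (hf : HasDerivAt f f' x) (hg : HasDerivAt g g' x) :
    HasDerivAt (fun t => f t ⬝ᵥ g t) (f' ⬝ᵥ g x + f x ⬝ᵥ g') x := by
  have hfg : ∀ i, HasDerivAt (fun t => f t i * g t i) (f' i * g x i + f x i * g' i) x :=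
    fun i => (hasDerivAt_pi.mp hf i).mul (hasDerivAt_pi.mp hg i)
  simp only [_root_.dotProduct, ← Finset.sum_add_distrib]
  exact HasDerivAt.fun_sum fun i _ => hfg i

theorem dot_cross_eq_zero_of_cross_eq_smul_cross {R : Type*} [CommRing R]
    {u v w : Fin 3 → R} {c : R} (h : u ⨯₃ v = c • (w ⨯₃ v)) : w ⬝ᵥ u ⨯₃ v = 0 := by
  rw [h, dotProduct_smul, dot_self_cross, smul_zero]

theorem ball_spin_deriv_eq_zero {R : Type*} [CommRing R] [IsDomain R] {ε δ r I₁ : R}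
    (hI₁ : I₁ ≠ 0) {Ω W Ω₁ Γ Ω₁' : Fin 3 → R}
    (hmom : I₁ • Ω₁' = I₁ • (Ω₁ ⨯₃ Ω) + r • (Γ ⨯₃ W))
    (hconstr : Ω₁ ⨯₃ Γ = δ • (Ω ⨯₃ Γ)) :
    Ω₁' ⬝ᵥ Γ + Ω₁ ⬝ᵥ ε • (Γ ⨯₃ Ω) = 0 := by
  have htriple : Ω₁ ⬝ᵥ Γ ⨯₃ Ω = 0 := by
    rw [triple_product_permutation, triple_product_permutation,
      dot_cross_eq_zero_of_cross_eq_smul_cross hconstr]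
  have hspin : I₁ * (Ω₁' ⬝ᵥ Γ) = 0 := by
    rw [← smul_eq_mul, ← smul_dotProduct, hmom, add_dotProduct, smul_dotProduct,
      smul_dotProduct, dotProduct_comm (Γ ⨯₃ W), dot_self_cross, dotProduct_comm,
      triple_product_permutation, ← cross_anticomm, dotProduct_neg, htriple]
    simp
  rw [(mul_eq_zero.mp hspin).resolve_left hI₁, dotProduct_smul, htriple, smul_zero, add_zero]

theorem spherical_ball_bearing_ball_spin_constant
    (ε δ r I₁ : ℝ) (hI₁ : 0 < I₁)
    (Ω W Ω₁ Γ Ω₁' : ℝ → Fin 3 → ℝ)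
    (hΩ₁ : ∀ t : ℝ, HasDerivAt Ω₁ (Ω₁' t) t)
    (hmom : ∀ t : ℝ, I₁ • Ω₁' t = I₁ • (Ω₁ t ⨯₃ Ω t) + r • (Γ t ⨯₃ W t))
    (hΓ : ∀ t : ℝ, HasDerivAt Γ (ε • (Γ t ⨯₃ Ω t)) t)
    (hconstr : ∀ t : ℝ, Ω₁ t ⨯₃ Γ t = δ • (Ω t ⨯₃ Γ t)) :
    ∀ s t : ℝ, Ω₁ s ⬝ᵥ Γ s = Ω₁ t ⬝ᵥ Γ t := by
  have hderiv : ∀ t, HasDerivAt (fun t => Ω₁ t ⬝ᵥ Γ t) 0 t := fun t => by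
    simpa only [ball_spin_deriv_eq_zero hI₁.ne' (hmom t) (hconstr t)] using
      (hΩ₁ t).dotProduct (hΓ t)
  exact is_const_of_deriv_eq_zero (fun t => (hderiv t).differentiableAt)
    fun t => (hderiv t).deriv
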